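/- arXiv:2004.09762 — 3 statements merged into one kernel-verified Lean document; each statement's English description precedes it below -/
import Mathlib

section
/- Every rectifiable loop c : [0,1] → M admits a δ-approximating loop c̄ : [0,1] → N; moreover c̄ can be chosen to be a concatenation of finitely many minimizing geodesic segments of N, each of length at most (2/5)δ, and to satisfy sup_{t∈[0,1]} d_N(Φ(c(t)), c̄(t)) ≤ (7/10)δ. -/
open Metric Set
open scoped ENNReal unitInterval

/-- A geodesic metric space: any two points are joined by a path along which
the distance is realized affinely (a minimizing geodesic). -/
def IsGeodesicSpace (X : Type*) [MetricSpace X] : Prop :=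
  ∀ x y : X, ∃ γ : Path x y, ∀ s t : unitInterval,
    dist (γ s) (γ t) = |(s : ℝ) - (t : ℝ)| * dist x y

/-- A loop in a metric space `X`: a map `ℝ → X`, continuous on `[0,1]`,
with equal endpoints. -/
structure MLoop (X : Type*) [MetricSpace X] where
  toFun : ℝ → X
  continuousOn : ContinuousOn toFun (Set.Icc 0 1)
  closed : toFun 0 = toFun 1

/-- The length of a loop: the total variation of the map on `[0,1]`. -/
noncomputable def MLoop.length {X : Type*} [MetricSpace X] (c : MLoop X) : ℝ≥0∞ :=
  eVariationOn c.toFun (Set.Icc 0 1)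

/-- A loop, as a `Path` from its basepoint to itself. -/
noncomputable def MLoop.path {X : Type*} [MetricSpace X] (c : MLoop X) :
    Path (c.toFun 0) (c.toFun 0) where
  toFun := fun t : unitInterval => c.toFun t
  continuous_toFun := c.continuousOn.restrict
  source' := rfl
  target' := c.closed.symm

attribute [local instance] Path.Homotopic.setoid

/-- The element of the fundamental group determined by a homotopy class of a based loop. -/
noncomputable def FundamentalGroup.ofLoop {X : Type*} [TopologicalSpace X] {x : X}
    (p : Path.Homotopic.Quotient x x) : FundamentalGroup X x :=
  FundamentalGroup.fromPath p

open Classical in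
/-- The class, in the abelianized fundamental group based at `x₀`, of a loop based
at a (possibly) different point `x`: conjugate by some path joining `x₀` to `x`.
(In a path-connected space the result is independent of the choice of path.) -/
noncomputable def loopClassAt {X : Type*} [TopologicalSpace X] (x₀ : X) {x : X}
    (γ : Path x x) : Abelianization (FundamentalGroup X x₀) :=
  if h : Joined x₀ x then
    Abelianization.of (FundamentalGroup.ofLoop ⟦(h.somePath.trans γ).trans h.somePath.symm⟧)
  else 1

/-- The first homology group of a (nonempty, path-connected) space, realized as the
abelianization of the fundamental group, written additively. -/
noncomputable def H1 (X : Type*) [TopologicalSpace X] [Nonempty X] : Type _ :=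
  Additive (Abelianization (FundamentalGroup X (Classical.arbitrary X)))

noncomputable instance {X : Type*} [TopologicalSpace X] [Nonempty X] : AddCommGroup (H1 X) :=
  inferInstanceAs
    (AddCommGroup (Additive (Abelianization (FundamentalGroup X (Classical.arbitrary X)))))

/-- The first homology class `[[c]]` of a loop `c`. -/
noncomputable def MLoop.h1 {X : Type*} [MetricSpace X] [Nonempty X] (c : MLoop X) : H1 X :=
  Additive.ofMul (loopClassAt (Classical.arbitrary X) c.path)

/-- `H_1^δ(X;ℤ)`: the subgroup of `H_1(X;ℤ)` generated by classes of (rectifiable)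
loops of length at most `10 δ`. -/
noncomputable def H1short (X : Type*) [MetricSpace X] [Nonempty X] (δ : ℝ) :
    AddSubgroup (H1 X) :=
  AddSubgroup.closure
    {a | ∃ c : MLoop X, c.length ≤ ENNReal.ofReal (10 * δ) ∧ a = c.h1}

/-- `cb` is a `δ`-approximating loop (in `N`) of the loop `c` (in `M`), relative to the
Gromov–Hausdorff approximation `Φ : M → N`. -/
def IsApproxLoop {M N : Type*} [MetricSpace M] [MetricSpace N] (Φ : M → N) (δ : ℝ)
    (c : MLoop M) (cb : MLoop N) : Prop :=
  ∀ t ∈ Set.Icc (0 : ℝ) 1, dist (cb.toFun t) (Φ (c.toFun t)) < δ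

/-- A loop is a concatenation of finitely many minimizing geodesic segments, each of
length at most `ℓ`. -/
def PiecewiseGeodesic {X : Type*} [MetricSpace X] (c : MLoop X) (ℓ : ℝ) : Prop :=
  ∃ (n : ℕ) (t : ℕ → ℝ), t 0 = 0 ∧ t n = 1 ∧ (∀ i < n, t i ≤ t (i + 1)) ∧
    ∀ i < n,
      eVariationOn c.toFun (Set.Icc (t i) (t (i + 1))) =
        ENNReal.ofReal (dist (c.toFun (t i)) (c.toFun (t (i + 1)))) ∧
      dist (c.toFun (t i)) (c.toFun (t (i + 1))) ≤ ℓ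

/-- Every closed ball of radius `ι` in `N` is contractible in `N` (its inclusion is
null-homotopic). -/
def BallsContractibleIn (N : Type*) [MetricSpace N] (ι : ℝ) : Prop :=
  ∀ z : N, ∃ y : N,
    ContinuousMap.Homotopic
      (⟨Subtype.val, continuous_subtype_val⟩ : C(Metric.closedBall z ι, N))
      (ContinuousMap.const _ y)

/-- Two loops are freely homotopic: homotopic through a continuous family of loops. -/
def MLoop.FreelyHomotopic {X : Type*} [MetricSpace X] (c₀ c₁ : MLoop X) : Prop :=
  ∃ H : ℝ × ℝ → X, ContinuousOn H (Set.Icc 0 1 ×ˢ Set.Icc 0 1) ∧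
    (∀ t ∈ Set.Icc (0 : ℝ) 1, H (0, t) = c₀.toFun t) ∧
    (∀ t ∈ Set.Icc (0 : ℝ) 1, H (1, t) = c₁.toFun t) ∧
    (∀ s ∈ Set.Icc (0 : ℝ) 1, H (s, 0) = H (s, 1))

/-! Sample `c` on a uniform partition `i / n` of `[0,1]` so fine that `c` moves by at most `δ/10`
on each piece. The points `Φ (c (i / n))` are then `δ/5`-apart, and joining consecutive ones by
minimizing geodesics of `N` gives `c̄`. On the `i`-th piece both `Φ ∘ c` and `c̄` stay within `δ/5`
of `Φ (c (i / n))`, hence within `2δ/5` of each other. -/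

theorem eVariationOn_Icc_eq_of_dist_eq_mul {X : Type*} [PseudoMetricSpace X] {f : ℝ → X}
    {a b L : ℝ} (hab : a ≤ b) (hL : 0 ≤ L)
    (h : ∀ s ∈ Icc a b, ∀ t ∈ Icc a b, dist (f s) (f t) = L * |s - t|) :
    eVariationOn f (Icc a b) = ENNReal.ofReal (dist (f a) (f b)) := by
  have ha : a ∈ Icc a b := left_mem_Icc.2 hab
  have hb : b ∈ Icc a b := right_mem_Icc.2 hab
  refine le_antisymm ?_ (edist_dist (f a) (f b) ▸ eVariationOn.edist_le f ha hb)
  have hlip : LipschitzOnWith (Real.toNNReal L) f (Icc a b) :=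
    LipschitzOnWith.of_dist_le_mul fun x hx y hy => by
      rw [h x hx y hy, Real.dist_eq, Real.coe_toNNReal L hL]
  have hid : eVariationOn (id : ℝ → ℝ) (Icc a b) ≤ ENNReal.ofReal (b - a) := by
    simpa only [inter_self, id_eq] using (monotoneOn_id.eVariationOn_eq ha hb).le
  calc eVariationOn f (Icc a b) = eVariationOn (f ∘ id) (Icc a b) := rfl
    _ ≤ ENNReal.ofReal L * eVariationOn (id : ℝ → ℝ) (Icc a b) :=
        hlip.comp_eVariationOn_le (mapsTo_id _)
    _ ≤ ENNReal.ofReal L * ENNReal.ofReal (b - a) := mul_le_mul_right hid _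
    _ = ENNReal.ofReal (dist (f a) (f b)) := by
        rw [← ENNReal.ofReal_mul hL, h a ha b hb, abs_sub_comm, abs_of_nonneg (sub_nonneg.2 hab)]

section UniformPartition

variable {n : ℕ}

theorem Icc_div_subset_Icc_zero_one {i : ℕ} (hi : i < n) :
    Icc ((i : ℝ) / n) ((i + 1) / n) ⊆ Icc 0 1 := by
  have hn : (0 : ℝ) < n := by exact_mod_cast (Nat.zero_lt_of_lt hi)
  have hi' : (i : ℝ) + 1 ≤ n := by exact_mod_cast hi
  exact Icc_subset_Icc (by positivity) ((div_le_one hn).2 hi')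

theorem natCast_mul_mem_Icc_of_mem_Icc_div (hn : 0 < n) {i : ℕ} {s : ℝ}
    (hs : s ∈ Icc ((i : ℝ) / n) ((i + 1) / n)) : (n : ℝ) * s ∈ Icc (i : ℝ) (i + 1) := by
  have hn : (0 : ℝ) < n := by exact_mod_cast hn
  exact ⟨(div_le_iff₀' hn).1 hs.1, (le_div_iff₀' hn).1 hs.2⟩

theorem exists_lt_mem_Icc_div (hn : 0 < n) {s : ℝ} (hs : s ∈ Icc (0 : ℝ) 1) :
    ∃ i < n, s ∈ Icc ((i : ℝ) / n) ((i + 1) / n) := by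
  have hn' : (0 : ℝ) < n := by exact_mod_cast hn
  rcases hs.2.eq_or_lt with rfl | hs1
  · refine ⟨n - 1, Nat.sub_lt hn one_pos, ?_, ?_⟩ <;> rw [Nat.cast_pred hn]
    · rw [div_le_one hn']; linarith
    · rw [sub_add_cancel, div_self hn'.ne']
  · have hns : 0 ≤ (n : ℝ) * s := mul_nonneg hn'.le hs.1
    refine ⟨⌊(n : ℝ) * s⌋₊, (Nat.floor_lt hns).2 (by nlinarith), ?_, ?_⟩
    · rw [div_le_iff₀' hn']; exact Nat.floor_le hns
    · rw [le_div_iff₀' hn']; exact (Nat.lt_floor_add_one _).le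

theorem ContinuousOn.exists_pos_forall_dist_le_of_mem_Icc_div {X : Type*} [PseudoMetricSpace X]
    {f : ℝ → X} (hf : ContinuousOn f (Icc 0 1)) {η : ℝ} (hη : 0 < η) :
    ∃ n : ℕ, 0 < n ∧
      ∀ i < n, ∀ s ∈ Icc ((i : ℝ) / n) ((i + 1) / n), dist (f s) (f (i / n)) ≤ η := by
  obtain ⟨ε, hε, hfε⟩ := Metric.uniformContinuousOn_iff_le.1
    (isCompact_Icc.uniformContinuousOn_of_continuous hf) η hη
  obtain ⟨m, hm⟩ := exists_nat_one_div_lt hε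
  refine ⟨m + 1, m.succ_pos, fun i hi s hs => ?_⟩
  have hsub := Icc_div_subset_Icc_zero_one hi
  refine hfε s (hsub hs) _ (hsub (left_mem_Icc.2 (hs.1.trans hs.2))) ?_
  rw [Real.dist_eq, abs_of_nonneg (sub_nonneg.2 hs.1)]
  have hpiece : ((i : ℝ) + 1) / (m + 1 : ℕ) - i / (m + 1 : ℕ) = 1 / ((m : ℝ) + 1) := by
    push_cast; ring
  linarith [hs.2]

end UniformPartition

section ConcatPaths

variable {X : Type*} [TopologicalSpace X] {p : ℕ → X}

noncomputable def concatPaths (γ : ∀ i, Path (p i) (p (i + 1))) (u : ℝ) : X :=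
  (γ ⌊u⌋₊).extend (u - ⌊u⌋₊)

variable (γ : ∀ i, Path (p i) (p (i + 1)))

theorem concatPaths_natCast (i : ℕ) : concatPaths γ i = p i := by
  simp [concatPaths]

theorem concatPaths_eq_of_mem_Icc {i : ℕ} {u : ℝ} (hu : u ∈ Icc (i : ℝ) (i + 1)) :
    concatPaths γ u = (γ i).extend (u - i) := by
  rcases hu.2.eq_or_lt with rfl | hlt
  · rw [← Nat.cast_succ, concatPaths_natCast, Nat.cast_succ, add_sub_cancel_left,
      Path.extend_one]
  · rw [concatPaths, (Nat.floor_eq_iff ((Nat.cast_nonneg i).trans hu.1)).2 ⟨hu.1, hlt⟩]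

theorem continuousOn_concatPaths (k : ℕ) : ContinuousOn (concatPaths γ) (Icc 0 k) := by
  induction k with
  | zero => simp
  | succ k ih =>
    have hk : ContinuousOn (concatPaths γ) (Icc (k : ℝ) (k + 1)) :=
      ((γ k).continuous_extend.comp (continuous_id.sub continuous_const)).continuousOn.congr
        fun u hu => concatPaths_eq_of_mem_Icc γ hu
    rw [Nat.cast_succ, ← Icc_union_Icc_eq_Icc (Nat.cast_nonneg k) (by linarith)]
    exact ih.union_of_isClosed hk isClosed_Icc isClosed_Icc

end ConcatPaths

def Path.IsMinimizingGeodesic {X : Type*} [PseudoMetricSpace X] {x y : X} (γ : Path x y) : Prop :=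
  ∀ s t : unitInterval, dist (γ s) (γ t) = |(s : ℝ) - t| * dist x y

theorem dist_concatPaths_of_mem_Icc {X : Type*} [PseudoMetricSpace X] {p : ℕ → X}
    {γ : ∀ i, Path (p i) (p (i + 1))} (hγ : ∀ i, (γ i).IsMinimizingGeodesic)
    {i : ℕ} {u v : ℝ} (hu : u ∈ Icc (i : ℝ) (i + 1)) (hv : v ∈ Icc (i : ℝ) (i + 1)) :
    dist (concatPaths γ u) (concatPaths γ v) = |u - v| * dist (p i) (p (i + 1)) := by
  have hu' : u - i ∈ Icc (0 : ℝ) 1 := ⟨by linarith [hu.1], by linarith [hu.2]⟩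
  have hv' : v - i ∈ Icc (0 : ℝ) 1 := ⟨by linarith [hv.1], by linarith [hv.2]⟩
  rw [concatPaths_eq_of_mem_Icc γ hu, concatPaths_eq_of_mem_Icc γ hv, Path.extend_apply _ hu',
    Path.extend_apply _ hv', hγ i ⟨_, hu'⟩ ⟨_, hv'⟩, sub_sub_sub_cancel_right]

namespace MLoop

variable {X : Type*} [MetricSpace X] {p : ℕ → X} {n : ℕ}

noncomputable def ofConcatPaths (γ : ∀ i, Path (p i) (p (i + 1))) (hp : p 0 = p n) :
    MLoop X where
  toFun s := concatPaths γ (n * s)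
  continuousOn :=
    (continuousOn_concatPaths γ n).comp (continuous_const.mul continuous_id).continuousOn
      fun s hs =>
        ⟨mul_nonneg (Nat.cast_nonneg n) hs.1, mul_le_of_le_one_right (Nat.cast_nonneg n) hs.2⟩
  closed := by
    simpa only [mul_zero, mul_one, Nat.cast_zero, concatPaths_natCast] using
      (concatPaths_natCast γ 0).trans (hp.trans (concatPaths_natCast γ n).symm)

variable {γ : ∀ i, Path (p i) (p (i + 1))} {hp : p 0 = p n}

theorem ofConcatPaths_apply_div (hn : 0 < n) (i : ℕ) :
    (ofConcatPaths γ hp).toFun (i / n) = p i := by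
  have hn : (n : ℝ) ≠ 0 := by exact_mod_cast hn.ne'
  simp only [ofConcatPaths, mul_div_cancel₀ _ hn, concatPaths_natCast]

theorem dist_ofConcatPaths_of_mem_Icc (hγ : ∀ i, (γ i).IsMinimizingGeodesic) (hn : 0 < n)
    {i : ℕ} {s t : ℝ}
    (hs : s ∈ Icc ((i : ℝ) / n) ((i + 1) / n)) (ht : t ∈ Icc ((i : ℝ) / n) ((i + 1) / n)) :
    dist ((ofConcatPaths γ hp).toFun s) ((ofConcatPaths γ hp).toFun t) =
      (n * dist (p i) (p (i + 1))) * |s - t| := by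
  rw [ofConcatPaths, dist_concatPaths_of_mem_Icc hγ (natCast_mul_mem_Icc_of_mem_Icc_div hn hs)
    (natCast_mul_mem_Icc_of_mem_Icc_div hn ht), ← mul_sub, abs_mul, Nat.abs_cast]
  ring

theorem dist_ofConcatPaths_le (hγ : ∀ i, (γ i).IsMinimizingGeodesic) (hn : 0 < n) {i : ℕ}
    {s : ℝ} (hs : s ∈ Icc ((i : ℝ) / n) ((i + 1) / n)) :
    dist (p i) ((ofConcatPaths γ hp).toFun s) ≤ dist (p i) (p (i + 1)) := by
  have hu := natCast_mul_mem_Icc_of_mem_Icc_div hn hs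
  have hi : (i : ℝ) ∈ Icc (i : ℝ) (i + 1) := left_mem_Icc.2 (by linarith)
  have h := dist_concatPaths_of_mem_Icc hγ hi hu
  rw [concatPaths_natCast, abs_sub_comm, abs_of_nonneg (sub_nonneg.2 hu.1)] at h
  rw [ofConcatPaths]
  exact h.trans_le (mul_le_of_le_one_left dist_nonneg (by linarith [hu.2]))

theorem piecewiseGeodesic_ofConcatPaths (hγ : ∀ i, (γ i).IsMinimizingGeodesic) (hn : 0 < n)
    {ℓ : ℝ} (hℓ : ∀ i < n, dist (p i) (p (i + 1)) ≤ ℓ) :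
    PiecewiseGeodesic (ofConcatPaths γ hp) ℓ := by
  have hn' : (0 : ℝ) < n := by exact_mod_cast hn
  refine ⟨n, fun i => (i : ℝ) / n, by simp, div_self hn'.ne', fun i _ => ?_, fun i hi => ?_⟩
  · dsimp only; gcongr; exact_mod_cast i.le_succ
  · have hpiece : (i : ℝ) / n ≤ (i + 1) / n := by gcongr; linarith
    dsimp only
    rw [ofConcatPaths_apply_div hn, ofConcatPaths_apply_div hn, Nat.cast_succ]
    refine ⟨?_, hℓ i hi⟩
    rw [eVariationOn_Icc_eq_of_dist_eq_mul hpiece (by positivity)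
        fun s hs t ht => dist_ofConcatPaths_of_mem_Icc hγ hn hs ht]
    simp only [← Nat.cast_succ, ofConcatPaths_apply_div hn]

end MLoop

theorem statement_0_general {M N : Type*} [MetricSpace M] [MetricSpace N]
    (hN : IsGeodesicSpace N)
    (δ : ℝ) (hδ : 0 < δ) (Φ : M → N)
    (hΦ : ∀ x y : M, |dist (Φ x) (Φ y) - dist x y| < δ / 10)
    (c : MLoop M) :
    ∃ cb : MLoop N,
      IsApproxLoop Φ δ c cb ∧
      (∀ t ∈ Set.Icc (0 : ℝ) 1, dist (Φ (c.toFun t)) (cb.toFun t) ≤ (7 / 10) * δ) ∧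
      PiecewiseGeodesic cb ((2 / 5) * δ) := by
  obtain ⟨n, hn, hmesh⟩ := c.continuousOn.exists_pos_forall_dist_le_of_mem_Icc_div
    (show 0 < δ / 10 by positivity)
  set p : ℕ → N := fun i => Φ (c.toFun (i / n))
  have hΦc : ∀ i < n, ∀ s ∈ Icc ((i : ℝ) / n) ((i + 1) / n),
      dist (Φ (c.toFun s)) (p i) ≤ δ / 5 :=
    fun i hi s hs => by linarith [(abs_lt.1 (hΦ (c.toFun s) (c.toFun (i / n)))).2, hmesh i hi s hs]
  have hstep : ∀ i < n, dist (p i) (p (i + 1)) ≤ δ / 5 := fun i hi => by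
    rw [dist_comm]
    simpa [p] using hΦc i hi _ (right_mem_Icc.2 (by gcongr; linarith))
  choose γ hγ using fun i => hN (p i) (p (i + 1))
  have hp : p 0 = p n := by simp [p, c.closed, (Nat.cast_pos.2 hn).ne']
  set cb := MLoop.ofConcatPaths γ hp
  have hclose : ∀ t ∈ Icc (0 : ℝ) 1, dist (Φ (c.toFun t)) (cb.toFun t) ≤ 2 / 5 * δ := by
    intro t ht
    obtain ⟨i, hi, hti⟩ := exists_lt_mem_Icc_div hn ht
    calc dist (Φ (c.toFun t)) (cb.toFun t)
        ≤ dist (Φ (c.toFun t)) (p i) + dist (p i) (cb.toFun t) := dist_triangle _ _ _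
      _ ≤ δ / 5 + δ / 5 :=
          add_le_add (hΦc i hi t hti) ((MLoop.dist_ofConcatPaths_le hγ hn hti).trans (hstep i hi))
      _ = 2 / 5 * δ := by ring
  refine ⟨cb, fun t ht => ?_, fun t ht => ?_, ?_⟩
  · rw [dist_comm]; linarith [hclose t ht]
  · linarith [hclose t ht]
  · exact MLoop.piecewiseGeodesic_ofConcatPaths hγ hn fun i hi => by linarith [hstep i hi]

/-- Every rectifiable loop in `M` admits a `δ`-approximating loop in `N`
which is a concatenation of finitely many minimizing geodesic segments of `N`, each of
length at most `(2/5)δ`, and which satisfies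
`sup_t dist (Φ (c t)) (c̄ t) ≤ (7/10) δ`. -/
theorem statement_0 {M N : Type*} [MetricSpace M] [MetricSpace N]
    [CompactSpace M] [CompactSpace N]
    (hM : IsGeodesicSpace M) (hN : IsGeodesicSpace N)
    (δ : ℝ) (hδ : 0 < δ) (Φ : M → N)
    (hΦ : ∀ x y : M, |dist (Φ x) (Φ y) - dist x y| < δ / 10)
    (hdense : ∀ z : N, ∃ x : M, dist z (Φ x) ≤ δ / 10)
    (c : MLoop M) (hc : c.length ≠ ⊤) :
    ∃ cb : MLoop N,
      IsApproxLoop Φ δ c cb ∧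
      (∀ t ∈ Set.Icc (0 : ℝ) 1, dist (Φ (c.toFun t)) (cb.toFun t) ≤ (7 / 10) * δ) ∧
      PiecewiseGeodesic cb ((2 / 5) * δ) :=
  statement_0_general hN δ hδ Φ hΦ c
end

section
/- Let γ₀ and γ₁ be rectifiable loops in M admitting δ-approximating loops γ̄₀ and γ̄₁ in N that are freely homotopic in N (i.e. homotopic through a continuous family of loops). Then [[γ₀]] − [[γ₁]] ∈ H_1^δ(M;ℤ). -/
open Metric Set
open scoped ENNReal unitInterval

attribute [local instance] Path.Homotopic.setoid

/-! Sample the free homotopy `H` on a fine `K × K` grid and shadow each sample `H (sₖ, tⱼ)` by a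
point of `M` whose `Φ`-image is `δ`-close, taking the samples of `γ₀` and `γ₁` as first and last
rows. Adjacent shadows are at distance at most `5δ/2`, so every grid square, drawn with minimizing
geodesics, is a loop of length at most `10δ`. Telescoping over the squares shows that the geodesic
polygons through the first and last rows have the same class modulo `H₁^δ`. On a fine grid the
polygon through the samples of a rectifiable loop differs from the loop by bigons (an arc of the
loop followed by a geodesic back) of length at most `10δ`. -/

open CategoryTheory Filter Topology

namespace FundamentalGroupoid

variable {X : Type*} [TopologicalSpace X] [Nonempty X]

noncomputable def loopH1 (g : mk (Classical.arbitrary X) ⟶ mk (Classical.arbitrary X)) : H1 X :=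
  Additive.ofMul (Abelianization.of (FundamentalGroup.fromArrow g))

-- In `FundamentalGroup`, the product `g * f` is the composite `f ≫ g`.
theorem loopH1_comp (f g : mk (Classical.arbitrary X) ⟶ mk (Classical.arbitrary X)) :
    loopH1 (f ≫ g) = loopH1 f + loopH1 g := by
  rw [add_comm]
  exact congrArg Additive.ofMul (map_mul Abelianization.of _ _)

theorem loopH1_id : loopH1 (𝟙 (mk (Classical.arbitrary X))) = 0 :=
  congrArg Additive.ofMul (map_one Abelianization.of)

theorem loopH1_conj {x : X} (u v : mk (Classical.arbitrary X) ⟶ mk x) (g : mk x ⟶ mk x) :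
    loopH1 (u ≫ g ≫ inv u) = loopH1 (v ≫ g ≫ inv v) := by
  have h : u ≫ g ≫ inv u = (u ≫ inv v) ≫ (v ≫ g ≫ inv v) ≫ (v ≫ inv u) := by simp
  have h' : (u ≫ inv v) ≫ (v ≫ inv u) = 𝟙 _ := by simp
  rw [h, loopH1_comp, loopH1_comp, add_left_comm, ← loopH1_comp, h', loopH1_id, add_zero]

variable [PathConnectedSpace X]

noncomputable def fromBase (x : X) : mk (Classical.arbitrary X) ⟶ mk x :=
  fromPath (.mk (PathConnectedSpace.somePath _ x))

-- For `x ≠ y` this depends on the chosen paths `fromBase`; the choices cancel in every sum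
-- over a closed chain of morphisms.
noncomputable def h1Class {x y : X} (f : mk x ⟶ mk y) : H1 X :=
  loopH1 (fromBase x ≫ f ≫ inv (fromBase y))

theorem h1Class_comp {x y z : X} (f : mk x ⟶ mk y) (g : mk y ⟶ mk z) :
    h1Class (f ≫ g) = h1Class f + h1Class g := by
  have h : fromBase x ≫ (f ≫ g) ≫ inv (fromBase z) =
      (fromBase x ≫ f ≫ inv (fromBase y)) ≫ (fromBase y ≫ g ≫ inv (fromBase z)) := by simp
  rw [h1Class, h, loopH1_comp]
  rfl

theorem h1Class_id (x : X) : h1Class (𝟙 (mk x)) = 0 := by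
  have h : fromBase x ≫ 𝟙 (mk x) ≫ inv (fromBase x) = 𝟙 _ := by simp
  rw [h1Class, h, loopH1_id]

theorem h1Class_inv {x y : X} (f : mk x ⟶ mk y) : h1Class (inv f) = -h1Class f := by
  rw [eq_neg_iff_add_eq_zero, ← h1Class_comp, IsIso.inv_hom_id, h1Class_id]

end FundamentalGroupoid

namespace Path

variable {X : Type*} [TopologicalSpace X] [Nonempty X] [PathConnectedSpace X] {x y z : X}

noncomputable def h1 (P : Path x y) : H1 X :=
  FundamentalGroupoid.h1Class (FundamentalGroupoid.fromPath (.mk P))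

theorem h1_trans (P : Path x y) (Q : Path y z) : (P.trans Q).h1 = P.h1 + Q.h1 :=
  FundamentalGroupoid.h1Class_comp (.mk P) (.mk Q)

theorem h1_symm (P : Path x y) : P.symm.h1 = -P.h1 := by
  rw [h1, h1, ← FundamentalGroupoid.h1Class_inv, ← Groupoid.inv_eq_inv]
  rfl

theorem h1_refl (x : X) : (Path.refl x).h1 = 0 :=
  FundamentalGroupoid.h1Class_id x

theorem h1_cast (P : Path x y) {x' y' : X} (hx : x' = x) (hy : y' = y) :
    (P.cast hx hy).h1 = P.h1 := by
  subst hx hy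
  rfl

theorem Homotopic.h1_eq {P Q : Path x y} (h : P.Homotopic Q) : P.h1 = Q.h1 := by
  rw [h1, h1, Path.Homotopic.Quotient.eq.2 h]

theorem sum_h1_subpath (P : Path x y) (t : ℕ → I) (n : ℕ) :
    ∑ i ∈ Finset.range n, (P.subpath (t i) (t (i + 1))).h1 = (P.subpath (t 0) (t n)).h1 := by
  induction n with
  | zero => rw [Finset.sum_range_zero, subpath_self, h1_refl]
  | succ n ih =>
    rw [Finset.sum_range_succ, ih, ← h1_trans]
    exact Homotopic.h1_eq ⟨Homotopy.subpathTransSubpath P _ _ _⟩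

end Path

namespace MLoop

variable {X : Type*} [MetricSpace X] [Nonempty X] [PathConnectedSpace X]

theorem h1_eq_path_h1 (c : MLoop X) : c.h1 = c.path.h1 := by
  unfold MLoop.h1 loopClassAt
  rw [dif_pos (PathConnectedSpace.joined _ _)]
  have h := FundamentalGroupoid.loopH1_conj
    (.mk (PathConnectedSpace.joined (Classical.arbitrary X) (c.toFun 0)).somePath)
    (FundamentalGroupoid.fromBase _) (.mk c.path)
  rw [← Category.assoc, ← Groupoid.inv_eq_inv] at h
  exact h

theorem h1_eq_sum_h1_subpath (c : MLoop X) {t : ℕ → I} {n : ℕ} (h0 : t 0 = 0) (hn : t n = 1) :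
    c.h1 = ∑ i ∈ Finset.range n, (c.path.subpath (t i) (t (i + 1))).h1 := by
  rw [c.path.sum_h1_subpath, h0, hn, Path.subpath_zero_one, Path.h1_cast, c.h1_eq_path_h1]

end MLoop

namespace Path

variable {X : Type*} [PseudoEMetricSpace X] {x y z : X}

noncomputable def eLength (P : Path x y) : ℝ≥0∞ := eVariationOn P.extend (Icc 0 1)

theorem eLength_trans_le (P : Path x y) (Q : Path y z) :
    (P.trans Q).eLength ≤ P.eLength + Q.eLength := by
  have hsplit := eVariationOn.Icc_add_Icc (P.trans Q).extend (s := univ)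
    (by norm_num : (0 : ℝ) ≤ 1 / 2) (by norm_num : (1 / 2 : ℝ) ≤ 1) (mem_univ _)
  simp only [univ_inter] at hsplit
  rw [eLength, ← hsplit]
  gcongr
  · rw [eVariationOn.eq_of_eqOn (f' := P.extend ∘ (2 * ·))
      fun t ht => extend_trans_of_le_half P Q ht.2]
    exact eVariationOn.comp_le_of_monotoneOn _ _ (fun s _ t _ hst => by linarith)
      fun t ht => ⟨by linarith [ht.1], by linarith [ht.2]⟩
  · rw [eVariationOn.eq_of_eqOn (f' := Q.extend ∘ (2 * · - 1))
      fun t ht => extend_trans_of_half_le P Q ht.1]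
    exact eVariationOn.comp_le_of_monotoneOn _ _ (fun s _ t _ hst => by linarith)
      fun t ht => ⟨by linarith [ht.1], by linarith [ht.2]⟩

theorem eLength_symm_le (P : Path x y) : P.symm.eLength ≤ P.eLength := by
  rw [eLength, extend_symm]
  exact eVariationOn.comp_le_of_antitoneOn _ _ (fun s _ t _ hst => by linarith)
    fun t ht => ⟨by linarith [ht.2], by linarith [ht.1]⟩

theorem eLength_subpath_le (P : Path x y) {t₀ t₁ : I} (h : t₀ ≤ t₁) :
    (P.subpath t₀ t₁).eLength ≤ eVariationOn P.extend (Icc t₀ t₁) := by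
  have h' : (t₀ : ℝ) ≤ t₁ := h
  rw [eLength, eVariationOn.eq_of_eqOn (f' := P.extend ∘ fun s => (1 - s) * t₀ + s * t₁)]
  · refine eVariationOn.comp_le_of_monotoneOn _ _ (fun s _ t _ hst => by nlinarith)
      fun s hs => ⟨by nlinarith [hs.1, hs.2], by nlinarith [hs.1, hs.2]⟩
  · intro s hs
    have hmem : (1 - s) * (t₀ : ℝ) + s * t₁ ∈ Icc (0 : ℝ) 1 :=
      (Icc.convexComb t₀ t₁ ⟨s, hs⟩).2
    simp only [Function.comp, extend_apply _ hs, extend_apply _ hmem]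
    rfl

end Path

namespace IsGeodesicSpace

variable {X : Type*} [MetricSpace X] (hX : IsGeodesicSpace X)
include hX

noncomputable def path (x y : X) : Path x y := (hX x y).choose

theorem dist_path (x y : X) (s t : I) :
    dist (hX.path x y s) (hX.path x y t) = |(s : ℝ) - t| * dist x y :=
  (hX x y).choose_spec s t

theorem eLength_path_le (x y : X) : (hX.path x y).eLength ≤ ENNReal.ofReal (dist x y) := by
  have hLip : LipschitzOnWith (Real.toNNReal (dist x y)) (hX.path x y).extend (Icc 0 1) := by
    refine LipschitzOnWith.of_dist_le_mul fun s hs t ht => ?_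
    rw [Path.extend_apply _ hs, Path.extend_apply _ ht, hX.dist_path,
      Real.coe_toNNReal _ dist_nonneg, Real.dist_eq, mul_comm]
  have h := hLip.comp_eVariationOn_le (g := id) (mapsTo_id _)
  rwa [Function.comp_id, eVariationOn_id_Icc, sub_zero, ENNReal.ofReal_one, mul_one] at h

theorem pathConnectedSpace [Nonempty X] : PathConnectedSpace X :=
  PathConnectedSpace.mk inferInstance fun x y => ⟨hX.path x y⟩

end IsGeodesicSpace

section Variation

variable {E : Type*} [PseudoEMetricSpace E] {f : ℝ → E}

theorem BoundedVariationOn.continuousOn_variationOnFromTo {s : Set ℝ}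
    (hf : BoundedVariationOn f s) (hc : ContinuousOn f s) {a : ℝ} (ha : a ∈ s) :
    ContinuousOn (variationOnFromTo f s a) s := by
  intro x hx
  have hl := hf.tendsto_eVariationOn_Icc_zero_left ((hc x hx).mono inter_subset_left)
  have hr := hf.tendsto_eVariationOn_Icc_zero_right x ((hc x hx).mono inter_subset_left)
  have hlim := ((ENNReal.tendsto_toReal ENNReal.zero_ne_top).comp hl).add
    ((ENNReal.tendsto_toReal ENNReal.zero_ne_top).comp hr)
  rw [ENNReal.toReal_zero, add_zero] at hlim
  rw [ContinuousWithinAt, tendsto_iff_dist_tendsto_zero]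
  refine squeeze_zero' (Eventually.of_forall fun _ => dist_nonneg) ?_ hlim
  filter_upwards [self_mem_nhdsWithin] with y hy
  rw [Function.comp_apply, Function.comp_apply, Real.dist_eq,
    variationOnFromTo.sub_right hf.locallyBoundedVariationOn ha hy hx]
  rcases le_total x y with hxy | hyx
  · rw [variationOnFromTo.eq_of_le _ _ hxy, abs_of_nonneg ENNReal.toReal_nonneg]
    exact le_add_of_nonneg_left ENNReal.toReal_nonneg
  · rw [variationOnFromTo.eq_of_ge _ _ hyx, abs_neg, abs_of_nonneg ENNReal.toReal_nonneg]
    exact le_add_of_nonneg_right ENNReal.toReal_nonneg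

theorem BoundedVariationOn.exists_pos_eVariationOn_Icc_lt {a b : ℝ}
    (hf : BoundedVariationOn f (Icc a b)) (hc : ContinuousOn f (Icc a b)) {ε : ℝ} (hε : 0 < ε) :
    ∃ θ > 0, ∀ x ∈ Icc a b, ∀ y ∈ Icc a b, x ≤ y → y - x < θ →
      eVariationOn f (Icc x y) < ENNReal.ofReal ε := by
  rcases (Icc a b).eq_empty_or_nonempty with hab | ⟨a', ha'⟩
  · exact ⟨1, one_pos, fun x hx => by simp [hab] at hx⟩
  obtain ⟨θ, hθ, hV⟩ := Metric.uniformContinuousOn_iff.mp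
    (isCompact_Icc.uniformContinuousOn_of_continuous (hf.continuousOn_variationOnFromTo hc ha'))
    ε hε
  refine ⟨θ, hθ, fun x hx y hy hxy hyx => ?_⟩
  have hsub : Icc x y ⊆ Icc a b := Icc_subset_Icc hx.1 hy.2
  have hdist := hV x hx y hy (by rwa [Real.dist_eq, abs_sub_comm, abs_of_nonneg (by linarith)])
  rw [Real.dist_eq, abs_sub_comm,
    variationOnFromTo.sub_right hf.locallyBoundedVariationOn ha' hy hx,
    variationOnFromTo.eq_of_le _ _ hxy, inter_eq_right.mpr hsub,
    abs_of_nonneg ENNReal.toReal_nonneg] at hdist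
  rw [← ENNReal.ofReal_toReal (hf.mono hsub)]
  exact (ENNReal.ofReal_lt_ofReal_iff hε).mpr hdist

end Variation

theorem Path.h1_mem_H1short {X : Type*} [MetricSpace X] [Nonempty X] [PathConnectedSpace X]
    {δ : ℝ} {x : X} (P : Path x x) (hP : P.eLength ≤ ENNReal.ofReal (10 * δ)) :
    P.h1 ∈ H1short X δ := by
  let c : MLoop X := ⟨P.extend, P.continuous_extend.continuousOn, by simp⟩
  have hc : c.path = P.cast (by simp [c]) (by simp [c]) := by
    ext t
    exact P.extend_extends' t
  exact AddSubgroup.subset_closure ⟨c, hP, by rw [MLoop.h1_eq_path_h1, hc, Path.h1_cast]⟩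

namespace IsGeodesicSpace

variable {X : Type*} [MetricSpace X] [Nonempty X] [PathConnectedSpace X] (hX : IsGeodesicSpace X)
  {δ : ℝ}

noncomputable def polygonH1 (p : ℕ → X) (n : ℕ) : H1 X :=
  ∑ i ∈ Finset.range n, (hX.path (p i) (p (i + 1))).h1

theorem _root_.MLoop.h1_sub_polygonH1_mem_H1short (c : MLoop X) (hδ : 0 ≤ δ) {t : ℕ → I}
    {n : ℕ} (h0 : t 0 = 0) (hn : t n = 1) (ht : Monotone t)
    (hvar : ∀ i < n, eVariationOn c.toFun (Icc (t i) (t (i + 1))) ≤ ENNReal.ofReal (5 * δ)) :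
    c.h1 - hX.polygonH1 (fun i => c.path (t i)) n ∈ H1short X δ := by
  rw [c.h1_eq_sum_h1_subpath h0 hn, polygonH1, ← Finset.sum_sub_distrib]
  refine AddSubgroup.sum_mem _ fun i hi => ?_
  have hle : (t i : ℝ) ≤ t (i + 1) := ht i.le_succ
  have hcell := hvar i (Finset.mem_range.mp hi)
  rw [sub_eq_add_neg, ← Path.h1_symm, ← Path.h1_trans]
  refine Path.h1_mem_H1short _ ?_
  calc _ ≤ _ := Path.eLength_trans_le _ _
    _ ≤ eVariationOn c.toFun (Icc (t i) (t (i + 1))) +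
        edist (c.path (t i)) (c.path (t (i + 1))) := by
      gcongr
      · refine (c.path.eLength_subpath_le (ht i.le_succ)).trans_eq
          (eVariationOn.eq_of_eqOn fun s hs => ?_)
        exact c.path.extend_apply (Icc_subset_Icc (t i).2.1 (t (i + 1)).2.2 hs)
      · exact (Path.eLength_symm_le _).trans
          ((hX.eLength_path_le _ _).trans_eq (edist_dist _ _).symm)
    _ ≤ ENNReal.ofReal (5 * δ) + ENNReal.ofReal (5 * δ) := by
      gcongr
      exact (eVariationOn.edist_le c.toFun (left_mem_Icc.mpr hle) (right_mem_Icc.mpr hle)).trans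
        hcell
    _ = ENNReal.ofReal (10 * δ) := by
      rw [← ENNReal.ofReal_add (by positivity) (by positivity)]
      ring_nf

theorem square_mem_H1short {w x y z : X}
    (h : dist w x + dist x y + dist z y + dist w z ≤ 10 * δ) :
    (hX.path w x).h1 + (hX.path x y).h1 - (hX.path z y).h1 - (hX.path w z).h1 ∈ H1short X δ := by
  have hloop : (hX.path w x).h1 + (hX.path x y).h1 - (hX.path z y).h1 - (hX.path w z).h1 =
      ((hX.path w x).trans ((hX.path x y).trans ((hX.path z y).symm.trans
        (hX.path w z).symm))).h1 := by
    simp only [Path.h1_trans, Path.h1_symm]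
    abel
  rw [hloop]
  refine Path.h1_mem_H1short _ ?_
  calc _ ≤ (hX.path w x).eLength + ((hX.path x y).eLength + ((hX.path z y).symm.eLength +
        (hX.path w z).symm.eLength)) := by
        refine (Path.eLength_trans_le _ _).trans ?_
        gcongr
        refine (Path.eLength_trans_le _ _).trans ?_
        gcongr
        exact Path.eLength_trans_le _ _
    _ ≤ ENNReal.ofReal (dist w x) + (ENNReal.ofReal (dist x y) + (ENNReal.ofReal (dist z y) +
        ENNReal.ofReal (dist w z))) := by
        gcongr
        · exact hX.eLength_path_le _ _
        · exact hX.eLength_path_le _ _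
        · exact (Path.eLength_symm_le _).trans (hX.eLength_path_le _ _)
        · exact (Path.eLength_symm_le _).trans (hX.eLength_path_le _ _)
    _ ≤ ENNReal.ofReal (10 * δ) := by
        rw [← ENNReal.ofReal_add dist_nonneg dist_nonneg,
          ← ENNReal.ofReal_add dist_nonneg (by positivity),
          ← ENNReal.ofReal_add dist_nonneg (by positivity)]
        exact ENNReal.ofReal_le_ofReal (by linarith)

theorem polygonH1_sub_polygonH1_mem_H1short {p q : ℕ → X} {n : ℕ} (hp : p n = p 0)
    (hq : q n = q 0) (hsq : ∀ i < n, dist (p i) (p (i + 1)) + dist (p (i + 1)) (q (i + 1)) +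
      dist (q i) (q (i + 1)) + dist (p i) (q i) ≤ 10 * δ) :
    hX.polygonH1 p n - hX.polygonH1 q n ∈ H1short X δ := by
  -- The rungs `p i → q i` telescope, and the last rung is the first since both rows are closed.
  set rung : ℕ → H1 X := fun i => (hX.path (p i) (q i)).h1
  have hrung : rung n = rung 0 := by
    show (hX.path (p n) (q n)).h1 = _
    rw [hp, hq]
  have htele : hX.polygonH1 p n - hX.polygonH1 q n = ∑ i ∈ Finset.range n,
      ((hX.path (p i) (p (i + 1))).h1 + rung (i + 1) - (hX.path (q i) (q (i + 1))).h1 -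
        rung i) := by
    have h := Finset.sum_range_sub rung n
    rw [hrung, sub_self, Finset.sum_sub_distrib, sub_eq_zero] at h
    simp only [polygonH1, add_sub_right_comm _ (rung _), Finset.sum_sub_distrib,
      Finset.sum_add_distrib, h]
    abel
  rw [htele]
  exact AddSubgroup.sum_mem _ fun i hi => hX.square_mem_H1short (hsq i (Finset.mem_range.mp hi))

theorem polygonH1_sub_polygonH1_mem_H1short_of_grid (R : ℕ → ℕ → X) {m n : ℕ}
    (hclosed : ∀ k ≤ m, R k n = R k 0)
    (hrow : ∀ k ≤ m, ∀ j < n, dist (R k j) (R k (j + 1)) ≤ 5 * δ / 2)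
    (hcol : ∀ k < m, ∀ j ≤ n, dist (R k j) (R (k + 1) j) ≤ 5 * δ / 2) :
    hX.polygonH1 (R 0) n - hX.polygonH1 (R m) n ∈ H1short X δ := by
  induction m with
  | zero => simp
  | succ m ih =>
    have hstep := hX.polygonH1_sub_polygonH1_mem_H1short (hclosed m (by omega))
      (hclosed (m + 1) le_rfl) fun i hi => by
        linarith [hrow m (by omega) i hi, hcol m (by omega) (i + 1) hi,
          hrow (m + 1) le_rfl i hi, hcol m (by omega) i hi.le]
    simpa using add_mem (ih (fun k hk => hclosed k (by omega)) (fun k hk => hrow k (by omega))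
      fun k hk => hcol k (by omega)) hstep

end IsGeodesicSpace

-- `projIcc` extends the grid to all `j`, with `gridPoint K j = 1` for `j ≥ K`.
noncomputable def gridPoint (K j : ℕ) : I := projIcc 0 1 zero_le_one (j / K)

theorem gridPoint_zero (K : ℕ) : gridPoint K 0 = 0 := by simp [gridPoint]

theorem gridPoint_self {K : ℕ} (hK : K ≠ 0) : gridPoint K K = 1 := by
  simp [gridPoint, div_self (Nat.cast_ne_zero.mpr hK : (K : ℝ) ≠ 0)]

theorem monotone_gridPoint (K : ℕ) : Monotone (gridPoint K) := fun _ _ hij =>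
  monotone_projIcc _ (div_le_div_of_nonneg_right (Nat.cast_le.mpr hij) K.cast_nonneg)

theorem dist_gridPoint_succ_le (K j : ℕ) :
    dist (gridPoint K j) (gridPoint K (j + 1)) ≤ 1 / K := by
  refine (abs_projIcc_sub_projIcc _).trans_eq ?_
  rw [Nat.cast_succ, abs_sub_comm, add_div, add_sub_cancel_left, abs_of_nonneg (by positivity)]

theorem MLoop.exists_eVariationOn_gridPoint_le {X : Type*} [MetricSpace X] (c : MLoop X)
    (hc : c.length ≠ ⊤) {ε : ℝ} (hε : 0 < ε) :
    ∃ θ > 0, ∀ K : ℕ, 1 / (K : ℝ) < θ → ∀ i,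
      eVariationOn c.toFun (Icc (gridPoint K i) (gridPoint K (i + 1))) ≤ ENNReal.ofReal ε := by
  obtain ⟨θ, hθ, hvar⟩ := BoundedVariationOn.exists_pos_eVariationOn_Icc_lt hc c.continuousOn hε
  refine ⟨θ, hθ, fun K hK i => (hvar _ (gridPoint K i).2 _ (gridPoint K (i + 1)).2
    (monotone_gridPoint K i.le_succ) ?_).le⟩
  have hstep := dist_gridPoint_succ_le K i
  rw [Subtype.dist_eq, Real.dist_eq, abs_sub_comm] at hstep
  exact ((le_abs_self _).trans hstep).trans_lt hK

section Shadow

variable {M N : Type*} [MetricSpace N] {Φ : M → N} {δ : ℝ}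

theorem dist_le_of_dist_map_lt [MetricSpace M]
    (hΦ : ∀ x y : M, |dist (Φ x) (Φ y) - dist x y| < δ / 10) {x y : M} {z w : N}
    (hx : dist (Φ x) z < δ) (hy : dist (Φ y) w < δ) (hzw : dist z w < δ / 10) :
    dist x y ≤ 5 * δ / 2 := by
  have := dist_triangle4 (Φ x) z w (Φ y)
  rw [dist_comm w] at this
  linarith [(abs_lt.mp (hΦ x y)).1, dist_nonneg (x := z) (y := w)]

theorem exists_shadowing_grid (hdense : ∀ z : N, ∃ x : M, dist (Φ x) z < δ) (G : ℕ → ℕ → N)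
    {m n : ℕ} (hm : m ≠ 0) (hG : ∀ k, G k n = G k 0) {p q : ℕ → M} (hp : p n = p 0)
    (hq : q n = q 0) (hpG : ∀ j, dist (Φ (p j)) (G 0 j) < δ)
    (hqG : ∀ j, dist (Φ (q j)) (G m j) < δ) :
    ∃ R : ℕ → ℕ → M, R 0 = p ∧ R m = q ∧ (∀ k, R k n = R k 0) ∧
      ∀ k j, dist (Φ (R k j)) (G k j) < δ := by
  choose ψ hψ using hdense
  refine ⟨fun k => if k = 0 then p else if k = m then q else fun j => ψ (G k j),
    if_pos rfl, by simp [hm], fun k => ?_, fun k j => ?_⟩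
  · dsimp only
    split_ifs
    exacts [hp, hq, congrArg ψ (hG k)]
  · dsimp only
    split_ifs with h0 hm'
    · exact h0 ▸ hpG j
    · exact hm' ▸ hqG j
    · exact hψ _

theorem MLoop.FreelyHomotopic.exists_fine_grid [MetricSpace M]
    (hΦ : ∀ x y : M, |dist (Φ x) (Φ y) - dist x y| < δ / 10) (hδ : 0 < δ)
    (hdense : ∀ z : N, ∃ x : M, dist (Φ x) z < δ) {c₀ c₁ : MLoop M} {cb₀ cb₁ : MLoop N}
    (hap₀ : IsApproxLoop Φ δ c₀ cb₀) (hap₁ : IsApproxLoop Φ δ c₁ cb₁)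
    (hhom : cb₀.FreelyHomotopic cb₁) :
    ∃ η > 0, ∀ K : ℕ, K ≠ 0 → 1 / (K : ℝ) < η → ∃ R : ℕ → ℕ → M,
      R 0 = (fun j => c₀.path (gridPoint K j)) ∧ R K = (fun j => c₁.path (gridPoint K j)) ∧
      (∀ k, R k K = R k 0) ∧ (∀ k j, dist (R k j) (R k (j + 1)) ≤ 5 * δ / 2) ∧
      ∀ k j, dist (R k j) (R (k + 1) j) ≤ 5 * δ / 2 := by
  obtain ⟨H, hH, hH₀, hH₁, hHloop⟩ := hhom
  obtain ⟨η, hη, hHη⟩ := Metric.uniformContinuousOn_iff.mp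
    ((isCompact_Icc.prod isCompact_Icc).uniformContinuousOn_of_continuous hH) (δ / 10)
    (by positivity)
  refine ⟨η, hη, fun K hK hKη => ?_⟩
  set T := gridPoint K
  have hT0 : T 0 = 0 := gridPoint_zero K
  have hTK : T K = 1 := gridPoint_self hK
  have hG : ∀ k j k' j', dist (T k) (T k') < η → dist (T j) (T j') < η →
      dist (H (T k, T j)) (H (T k', T j')) < δ / 10 := fun k j k' j' hk hj =>
    hHη _ ⟨(T k).2, (T j).2⟩ _ ⟨(T k').2, (T j').2⟩ (by rw [Prod.dist_eq]; exact max_lt hk hj)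
  have hstep : ∀ j, dist (T j) (T (j + 1)) < η := fun j =>
    (dist_gridPoint_succ_le K j).trans_lt hKη
  obtain ⟨R, hR₀, hRK, hRclosed, hRH⟩ := exists_shadowing_grid hdense (fun k j => H (T k, T j))
    (n := K) hK
    (fun k => by
      simp only [hT0, hTK, Set.Icc.coe_zero, Set.Icc.coe_one]
      exact (hHloop _ (T k).2).symm)
    (p := fun j => c₀.path (T j)) (q := fun j => c₁.path (T j))
    (by simp only [hT0, hTK, Path.source, Path.target])
    (by simp only [hT0, hTK, Path.source, Path.target])
    (fun j => by
      rw [dist_comm, hT0]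
      simp only [Set.Icc.coe_zero, hH₀ _ (T j).2]
      exact hap₀ _ (T j).2)
    (fun j => by
      rw [dist_comm, hTK]
      simp only [Set.Icc.coe_one, hH₁ _ (T j).2]
      exact hap₁ _ (T j).2)
  refine ⟨R, hR₀, hRK, hRclosed, fun k j => ?_, fun k j => ?_⟩
  · exact dist_le_of_dist_map_lt hΦ (hRH k j) (hRH k (j + 1))
      (hG k j k (j + 1) (by simpa using hη) (hstep j))
  · exact dist_le_of_dist_map_lt hΦ (hRH k j) (hRH (k + 1) j)
      (hG k j (k + 1) j (hstep k) (by simpa using hη))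

end Shadow

theorem statement_3_general {M N : Type*} [MetricSpace M] [MetricSpace N]
    [Nonempty M]
    (hM : IsGeodesicSpace M)
    (δ : ℝ) (hδ : 0 < δ) (Φ : M → N)
    (hΦ : ∀ x y : M, |dist (Φ x) (Φ y) - dist x y| < δ / 10)
    (hdense : ∀ z : N, ∃ x : M, dist z (Φ x) ≤ δ / 10)
    (γ₀ γ₁ : MLoop M) (h₀ : γ₀.length ≠ ⊤) (h₁ : γ₁.length ≠ ⊤)
    (γb₀ γb₁ : MLoop N)
    (hap₀ : IsApproxLoop Φ δ γ₀ γb₀) (hap₁ : IsApproxLoop Φ δ γ₁ γb₁)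
    (hhom : γb₀.FreelyHomotopic γb₁) :
    γ₀.h1 - γ₁.h1 ∈ H1short M δ := by
  have := hM.pathConnectedSpace
  obtain ⟨η, hη, hgrid⟩ := hhom.exists_fine_grid hΦ hδ
    (fun z => (hdense z).imp fun x hx => by rw [dist_comm]; linarith) hap₀ hap₁
  obtain ⟨θ₀, hθ₀, hvar₀⟩ := γ₀.exists_eVariationOn_gridPoint_le h₀ (by positivity : 0 < 5 * δ)
  obtain ⟨θ₁, hθ₁, hvar₁⟩ := γ₁.exists_eVariationOn_gridPoint_le h₁ (by positivity : 0 < 5 * δ)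
  obtain ⟨n, hn⟩ := exists_nat_one_div_lt (lt_min (lt_min hη hθ₀) hθ₁)
  have hK : 1 / ((n + 1 : ℕ) : ℝ) < min (min η θ₀) θ₁ := by rwa [Nat.cast_succ]
  simp only [lt_min_iff] at hK
  obtain ⟨R, hR₀, hRK, hclosed, hrow, hcol⟩ := hgrid (n + 1) n.succ_ne_zero hK.1.1
  have hR := hM.polygonH1_sub_polygonH1_mem_H1short_of_grid R (m := n + 1)
    (fun k _ => hclosed k) (fun k _ j _ => hrow k j) (fun k _ j _ => hcol k j)
  rw [hR₀, hRK] at hR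
  have hγ₀ := γ₀.h1_sub_polygonH1_mem_H1short hM hδ.le (gridPoint_zero _)
    (gridPoint_self n.succ_ne_zero) (monotone_gridPoint _) fun i _ => hvar₀ _ hK.1.2 i
  have hγ₁ := γ₁.h1_sub_polygonH1_mem_H1short hM hδ.le (gridPoint_zero _)
    (gridPoint_self n.succ_ne_zero) (monotone_gridPoint _) fun i _ => hvar₁ _ hK.2 i
  convert sub_mem (add_mem hγ₀ hR) hγ₁ using 1
  abel

/-- If two rectifiable loops of `M` admit `δ`-approximating loops in `N`
that are freely homotopic in `N`, then `[[γ₀]] - [[γ₁]] ∈ H₁^δ(M;ℤ)`. -/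
theorem statement_3 {M N : Type*} [MetricSpace M] [MetricSpace N]
    [CompactSpace M] [CompactSpace N] [Nonempty M]
    (hM : IsGeodesicSpace M) (hN : IsGeodesicSpace N)
    (δ : ℝ) (hδ : 0 < δ) (Φ : M → N)
    (hΦ : ∀ x y : M, |dist (Φ x) (Φ y) - dist x y| < δ / 10)
    (hdense : ∀ z : N, ∃ x : M, dist z (Φ x) ≤ δ / 10)
    (γ₀ γ₁ : MLoop M) (h₀ : γ₀.length ≠ ⊤) (h₁ : γ₁.length ≠ ⊤)
    (γb₀ γb₁ : MLoop N)
    (hap₀ : IsApproxLoop Φ δ γ₀ γb₀) (hap₁ : IsApproxLoop Φ δ γ₁ γb₁)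
    (hhom : γb₀.FreelyHomotopic γb₁) :
    γ₀.h1 - γ₁.h1 ∈ H1short M δ :=
  statement_3_general hM δ hδ Φ hΦ hdense γ₀ γ₁ h₀ h₁ γb₀ γb₁ hap₀ hap₁ hhom
end

section
/- For every rectifiable loop c based at p whose image is contained in the open metric ball B(p, δ), the homotopy class [c] ∈ π₁(X, p) can be written as a finite product of homotopy classes of loops based at p, each of length strictly less than 2δ. -/
open Metric Set
open scoped ENNReal unitInterval

attribute [local instance] Path.Homotopic.setoid

/-- The length of a `Path`, as its total variation. -/
noncomputable def pathLength {X : Type*} [MetricSpace X] {x y : X} (γ : Path x y) : ℝ≥0∞ :=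
  eVariationOn (fun t : unitInterval => γ t) Set.univ

/-- The homotopy class in the fundamental group of a loop based at `p`. -/
noncomputable def basedLoopClass {X : Type*} [TopologicalSpace X] {p : X} (γ : Path p p) :
    FundamentalGroup X p :=
  FundamentalGroup.ofLoop ⟦γ⟧


/-!
Since the image of `γ` is compact, it lies in a closed ball `closedBall p r` with `r < δ`.
The length of `γ` on `[0, s]` depends continuously on `s`, so `γ` can be cut into arcs `σᵢ`
of length at most `δ - r`; join `p` to each cut point by a minimizing geodesic `gᵢ`
(of length `≤ r`). The loops `gᵢ σᵢ gᵢ₊₁⁻¹` have length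
`≤ δ + r < 2δ`, and their product telescopes to `[γ]` up to the classes of the two
geodesics at the endpoints, which are short loops themselves.
-/

section Variation

variable {α E : Type*} [LinearOrder α] [TopologicalSpace α] [OrderTopology α]
  [PseudoMetricSpace E]

theorem LocallyBoundedVariationOn.continuous_variationOnFromTo {f : α → E}
    (hf : LocallyBoundedVariationOn f univ) (hc : Continuous f) (a : α) :
    Continuous (variationOnFromTo f univ a) := by
  refine continuous_iff_continuousAt.2 fun b ↦
    continuousAt_iff_continuous_left_right.2 ⟨?_, ?_⟩
  · rw [← continuousWithinAt_Iio_iff_Iic]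
    simpa [ContinuousWithinAt] using variationOnFromTo.tendsto_left (mem_univ a) (mem_univ b) hf
      ((hc.tendsto b).mono_left nhdsWithin_le_nhds)
  · rw [← continuousWithinAt_Ioi_iff_Ici]
    simpa [ContinuousWithinAt] using variationOnFromTo.tendsto_right (mem_univ a) (mem_univ b) hf
      ((hc.tendsto b).mono_left nhdsWithin_le_nhds)

theorem BoundedVariationOn.exists_partition_eVariationOn_Icc_le {f : I → E}
    (hf : BoundedVariationOn f univ) (hc : Continuous f) {ε : ℝ} (hε : 0 < ε) :
    ∃ (n : ℕ) (t : ℕ → I), Monotone t ∧ t 0 = 0 ∧ t n = 1 ∧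
      ∀ i < n, eVariationOn f (Icc (t i) (t (i + 1))) ≤ ENNReal.ofReal ε := by
  have hf' := hf.locallyBoundedVariationOn
  obtain ⟨η, hη, hv⟩ := Metric.uniformContinuous_iff.1
    (CompactSpace.uniformContinuous_of_continuous (hf'.continuous_variationOnFromTo hc 0)) ε hε
  obtain ⟨n, hn⟩ := exists_nat_one_div_lt hη
  set t : ℕ → I := fun i ↦ projIcc 0 1 zero_le_one (i / (n + 1))
  have ht : Monotone t := fun i j hij ↦ monotone_projIcc _ (by gcongr)
  refine ⟨n + 1, t, ht, by simp [t], by simp [t, div_self (by positivity : (n : ℝ) + 1 ≠ 0)],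
    fun i _ ↦ ?_⟩
  have hdist : dist (t (i + 1)) (t i) < η := calc
    dist (t (i + 1)) (t i) ≤ dist ((i + 1 : ℕ) / (n + 1) : ℝ) (i / (n + 1)) := by
      simpa [t] using (LipschitzWith.projIcc (zero_le_one' ℝ)).dist_le_mul
        (((i + 1 : ℕ) : ℝ) / (n + 1)) (i / (n + 1))
    _ = 1 / (n + 1) := by
      rw [Real.dist_eq]
      push_cast
      rw [show ((i : ℝ) + 1) / (n + 1) - i / (n + 1) = 1 / (n + 1) by ring,
        abs_of_pos (by positivity)]
    _ < η := hn
  have hvar := hv hdist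
  rw [Real.dist_eq, variationOnFromTo.sub_right hf' (mem_univ _) (mem_univ _) (mem_univ _),
    variationOnFromTo.eq_of_le _ _ (ht i.le_succ), univ_inter] at hvar
  rw [ENNReal.le_ofReal_iff_toReal_le (hf.mono (subset_univ _)) hε.le]
  exact (le_abs_self _).trans hvar.le

end Variation

section PathLength

variable {X : Type*} [MetricSpace X] {x y z w : X}

theorem Path.eVariationOn_extend_comp_le (γ : Path x y) {φ : I → ℝ} (hφ : Monotone φ)
    (s : Set I) : eVariationOn (fun t ↦ γ.extend (φ t)) s ≤ pathLength γ :=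
  eVariationOn.comp_le_of_monotoneOn (⇑γ) (projIcc 0 1 zero_le_one ∘ φ)
    (((monotone_projIcc (zero_le_one' ℝ)).comp hφ).monotoneOn s) (mapsTo_univ _ _)

theorem pathLength_trans_le (γ : Path x y) (γ' : Path y z) :
    pathLength (γ.trans γ') ≤ pathLength γ + pathLength γ' := by
  let half : I := ⟨1 / 2, by norm_num, by norm_num⟩
  have h₁ : EqOn (⇑(γ.trans γ')) (fun t ↦ γ.extend (2 * t)) (Iic half) := fun t ht ↦ by
    rw [← (γ.trans γ').extend_extends' t,
      Path.extend_trans_of_le_half _ _ (show (t : ℝ) ≤ 1 / 2 from ht)]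
  have h₂ : EqOn (⇑(γ.trans γ')) (fun t ↦ γ'.extend (2 * t - 1)) (Ici half) :=
    fun t ht ↦ by
      rw [← (γ.trans γ').extend_extends' t,
        Path.extend_trans_of_half_le _ _ (show 1 / 2 ≤ (t : ℝ) from ht)]
  rw [pathLength, ← Iic_union_Ici (a := half), eVariationOn.union _ isGreatest_Iic isLeast_Ici,
    eVariationOn.eq_of_eqOn h₁, eVariationOn.eq_of_eqOn h₂]
  gcongr
  · exact γ.eVariationOn_extend_comp_le (fun s t (hst : (s : ℝ) ≤ t) ↦ by linarith) _
  · exact γ'.eVariationOn_extend_comp_le (fun s t (hst : (s : ℝ) ≤ t) ↦ by linarith) _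

theorem pathLength_symm (γ : Path x y) : pathLength γ.symm = pathLength γ := by
  rw [pathLength, pathLength]
  conv_rhs => rw [← image_univ_of_surjective unitInterval.symm_involutive.surjective]
  exact eVariationOn.comp_eq_of_antitoneOn (⇑γ) σ fun s _ t _ hst ↦
    unitInterval.symm_le_symm.2 hst

theorem pathLength_trans_trans_symm_le (a : Path x y) (b : Path y z) (c : Path w z) :
    pathLength (a.trans (b.trans c.symm)) ≤ pathLength a + pathLength b + pathLength c := by
  grw [pathLength_trans_le, pathLength_trans_le, pathLength_symm, add_assoc]

theorem pathLength_subpath_le (γ : Path x y) {t₀ t₁ : I} (h : t₀ ≤ t₁) :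
    pathLength (γ.subpath t₀ t₁) ≤ eVariationOn γ (Icc t₀ t₁) := by
  refine eVariationOn.comp_le_of_monotoneOn (⇑γ) (Icc.convexComb t₀ t₁)
    (fun s _ t _ hst ↦ ?_) fun s _ ↦ ⟨Icc.le_convexComb h s, Icc.convexComb_le h s⟩
  have : (t₀ : ℝ) ≤ t₁ := h
  have : (s : ℝ) ≤ t := hst
  show (1 - (s : ℝ)) * t₀ + s * t₁ ≤ (1 - t) * t₀ + t * t₁
  nlinarith

theorem pathLength_le_of_dist_eq {γ : Path x y}
    (hγ : ∀ s t : I, dist (γ s) (γ t) = |(s : ℝ) - t| * dist x y) :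
    pathLength γ ≤ edist x y := by
  have hlip : LipschitzWith (nndist x y) γ := LipschitzWith.of_dist_le_mul fun s t ↦ by
    rw [hγ, Subtype.dist_eq, Real.dist_eq, mul_comm]
    rfl
  have hid : eVariationOn (id : I → I) univ = 1 := by
    have h := ((Subtype.mono_coe _).monotoneOn univ).eVariationOn_eq (f := ((↑) : I → ℝ))
      (mem_univ 0) (mem_univ 1)
    have hI : Icc (0 : I) 1 = univ :=
      eq_univ_of_forall fun t ↦ ⟨unitInterval.nonneg', unitInterval.le_one'⟩
    rw [univ_inter, hI] at h
    simp only [Icc.coe_one, Icc.coe_zero, sub_zero, ENNReal.ofReal_one] at h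
    exact h
  calc pathLength γ = eVariationOn (γ ∘ id) univ := rfl
    _ ≤ nndist x y * eVariationOn (id : I → I) univ :=
      (hlip.lipschitzOnWith (s := univ)).comp_eVariationOn_le (mapsTo_univ _ _)
    _ = edist x y := by rw [hid, mul_one, edist_nndist]

end PathLength

section FundamentalGroup

variable {X : Type*} [TopologicalSpace X] {p x y : X}

theorem basedLoopClass_trans (γ γ' : Path p p) :
    basedLoopClass (γ.trans γ') = basedLoopClass γ' * basedLoopClass γ := rfl

theorem basedLoopClass_symm (γ : Path p p) :
    basedLoopClass γ.symm = (basedLoopClass γ)⁻¹ := rfl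

theorem basedLoopClass_trans_subpath_trans_symm_mem {H : Subgroup (FundamentalGroup X p)}
    (γ : Path x y) (t : ℕ → I) (g : ∀ i, Path p (γ (t i))) (n : ℕ)
    (h : ∀ i < n, basedLoopClass
      ((g i).trans ((γ.subpath (t i) (t (i + 1))).trans (g (i + 1)).symm)) ∈ H) :
    basedLoopClass (((g 0).trans (γ.subpath (t 0) (t n))).trans (g n).symm) ∈ H := by
  induction n with
  | zero =>
    convert H.one_mem
    rw [Path.subpath_self]
    exact Quotient.sound
      (((Path.Homotopic.trans_refl _).hcomp (.refl _)).trans (Path.Homotopic.trans_symm _))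
  | succ n ih =>
    have hσ : Path.Homotopic.Quotient.mk
          ((γ.subpath (t 0) (t n)).trans (γ.subpath (t n) (t (n + 1)))) =
        Path.Homotopic.Quotient.mk (γ.subpath (t 0) (t (n + 1))) :=
      Path.Homotopic.Quotient.eq.2 ⟨Path.Homotopy.subpathTransSubpath γ _ _ _⟩
    have hsplit :
        basedLoopClass (((g 0).trans (γ.subpath (t 0) (t (n + 1)))).trans (g (n + 1)).symm) =
          basedLoopClass ((g n).trans ((γ.subpath (t n) (t (n + 1))).trans (g (n + 1)).symm)) *
            basedLoopClass (((g 0).trans (γ.subpath (t 0) (t n))).trans (g n).symm) := by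
      show Path.Homotopic.Quotient.mk _ = Path.Homotopic.Quotient.mk _
      simp only [Path.Homotopic.Quotient.mk_trans, Path.Homotopic.Quotient.mk_symm, ← hσ,
        Path.Homotopic.Quotient.trans_assoc]
      rw [← Path.Homotopic.Quotient.trans_assoc (Path.Homotopic.Quotient.mk (g n)).symm,
        Path.Homotopic.Quotient.symm_trans, Path.Homotopic.Quotient.refl_trans]
    rw [hsplit]
    exact H.mul_mem (h n n.lt_succ_self) (ih fun i hi ↦ h i (hi.trans n.lt_succ_self))

theorem Path.trans_subpath_trans_symm_eq (γ : Path p p) {s₀ s₁ : I} (hs₀ : s₀ = 0)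
    (hs₁ : s₁ = 1) (u : Path p (γ s₀)) (w : Path p (γ s₁)) :
    (u.trans (γ.subpath s₀ s₁)).trans w.symm =
      ((u.cast rfl (by simp [hs₀])).trans γ).trans (w.cast rfl (by simp [hs₁])).symm := by
  subst hs₀ hs₁
  ext t
  simp [Path.trans_apply]

end FundamentalGroup

section ShortLoops

variable {X : Type*} [MetricSpace X] {p : X} {L : ℝ≥0∞}

variable (p L) in
noncomputable def shortLoopSubgroup : Subgroup (FundamentalGroup X p) :=
  Subgroup.closure {x | ∃ γ' : Path p p, pathLength γ' < L ∧ x = basedLoopClass γ'}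

theorem basedLoopClass_mem_shortLoopSubgroup {γ : Path p p} (h : pathLength γ < L) :
    basedLoopClass γ ∈ shortLoopSubgroup p L :=
  Subgroup.subset_closure ⟨γ, h, rfl⟩

theorem basedLoopClass_mem_shortLoopSubgroup_of_partition (γ : Path p p) {n : ℕ} {t : ℕ → I}
    (ht0 : t 0 = 0) (htn : t n = 1) (g : ∀ i, Path p (γ (t i)))
    (hg : ∀ i, pathLength (g i) < L)
    (hα : ∀ i < n,
      pathLength ((g i).trans ((γ.subpath (t i) (t (i + 1))).trans (g (i + 1)).symm)) < L) :
    basedLoopClass γ ∈ shortLoopSubgroup p L := by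
  have hprod := basedLoopClass_trans_subpath_trans_symm_mem γ t g n fun i hi ↦
    basedLoopClass_mem_shortLoopSubgroup (hα i hi)
  rw [Path.trans_subpath_trans_symm_eq γ ht0 htn, basedLoopClass_trans, basedLoopClass_trans,
    basedLoopClass_symm] at hprod
  rwa [Subgroup.mul_mem_cancel_left _ (inv_mem (basedLoopClass_mem_shortLoopSubgroup
      (γ := (g n).cast rfl (by simp [htn])) (hg n))),
    Subgroup.mul_mem_cancel_right _ (basedLoopClass_mem_shortLoopSubgroup
      (γ := (g 0).cast rfl (by simp [ht0])) (hg 0))] at hprod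

end ShortLoops

theorem statement_12_general {X : Type*} [MetricSpace X] (hX : IsGeodesicSpace X)
    (p : X) (δ : ℝ)
    (γ : Path p p) (hrect : pathLength γ ≠ ⊤)
    (him : ∀ t : unitInterval, γ t ∈ Metric.ball p δ) :
    basedLoopClass γ ∈ Subgroup.closure
      {x : FundamentalGroup X p | ∃ γ' : Path p p,
        pathLength γ' < ENNReal.ofReal (2 * δ) ∧ x = basedLoopClass γ'} := by
  obtain ⟨r, hrδ, hr⟩ : ∃ r < δ, ∀ s, dist p (γ s) ≤ r := by
    obtain ⟨s₀, -, hs₀⟩ := isCompact_univ.exists_isMaxOn univ_nonempty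
      (continuous_const.dist γ.continuous).continuousOn
    exact ⟨dist p (γ s₀), by simpa [dist_comm] using him s₀, fun s ↦ hs₀ (mem_univ s)⟩
  have hr₀ : 0 ≤ r := dist_nonneg.trans (hr 0)
  obtain ⟨n, t, ht, ht0, htn, hpiece⟩ :=
    BoundedVariationOn.exists_partition_eVariationOn_Icc_le hrect γ.continuous (sub_pos.2 hrδ)
  choose g hg using fun i ↦ hX p (γ (t i))
  have hg_le : ∀ i, pathLength (g i) ≤ ENNReal.ofReal r := fun i ↦
    (pathLength_le_of_dist_eq (hg i)).trans (edist_dist p _ ▸ ENNReal.ofReal_le_ofReal (hr _))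
  have hsum : ENNReal.ofReal r + ENNReal.ofReal (δ - r) + ENNReal.ofReal r <
      ENNReal.ofReal (2 * δ) := by
    rw [← ENNReal.ofReal_add hr₀ (by linarith), ← ENNReal.ofReal_add (by linarith) hr₀,
      ENNReal.ofReal_lt_ofReal_iff (by linarith)]
    linarith
  refine basedLoopClass_mem_shortLoopSubgroup_of_partition γ ht0 htn g
    (fun i ↦ (hg_le i).trans_lt (le_add_self.trans_lt hsum)) fun i hi ↦
      (pathLength_trans_trans_symm_le _ _ _).trans_lt (lt_of_le_of_lt ?_ hsum)
  gcongr
  · exact hg_le i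
  · exact (pathLength_subpath_le γ (ht i.le_succ)).trans (hpiece i hi)
  · exact hg_le _

/-- In a geodesic space, the homotopy class of any rectifiable loop
based at `p` contained in `B(p, δ)` is a finite product of classes of loops based at
`p` of length `< 2δ`. -/
theorem statement_12 {X : Type*} [MetricSpace X] (hX : IsGeodesicSpace X)
    (p : X) (δ : ℝ) (hδ : 0 < δ)
    (γ : Path p p) (hrect : pathLength γ ≠ ⊤)
    (him : ∀ t : unitInterval, γ t ∈ Metric.ball p δ) :
    basedLoopClass γ ∈ Subgroup.closure
      {x : FundamentalGroup X p | ∃ γ' : Path p p,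
        pathLength γ' < ENNReal.ofReal (2 * δ) ∧ x = basedLoopClass γ'} :=
  statement_12_general hX p δ γ hrect him
end
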